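/- arXiv:1110.4792 — 6 statements merged into one kernel-verified Lean document; each statement's English description precedes it below -/
import Mathlib

section
/- Let ρ₁, ρ₂ be density operators and t ≥ 0. An operator M with 0 ≤ M ≤ I satisfies Tr((ρ₁ - tρ₂)M) = Tr((ρ₁ - tρ₂)₊) if and only if M = P₊ + X where P₊ is the support projection of (ρ₁ - tρ₂)₊, 0 ≤ X ≤ P₀, and P₀ is the projection onto the kernel of ρ₁ - tρ₂. (Quantum Neyman–Pearson lemma.) -/
/-!
In an eigenbasis of `A = ρ₁ - tρ₂`, with eigenvalues `dᵢ`, `Tr(AM) = ∑ dᵢ Mᵢᵢ` with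
`0 ≤ Mᵢᵢ ≤ 1`, which is at most `∑ max(dᵢ, 0) = Tr A₊`, with equality iff `Mᵢᵢ = 1` where
`dᵢ > 0` and `Mᵢᵢ = 0` where `dᵢ < 0`. A vanishing diagonal entry of a positive semidefinite
matrix kills its whole row and column; applied to `M` and to `1 - M`, this pins down every entry
of `M` outside the kernel block to that of `P₊`, so `M - P₊` is the compression of `M` to
`ker A`, which lies between `0` and `P₀`.
-/

open Matrix BigOperators
open scoped ComplexOrder

noncomputable section

def Matrix.IsHermitian.posPart {n : ℕ} {A : Matrix (Fin n) (Fin n) ℂ}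
    (hA : A.IsHermitian) : Matrix (Fin n) (Fin n) ℂ :=
  (hA.eigenvectorUnitary : Matrix (Fin n) (Fin n) ℂ) *
    Matrix.diagonal (fun i => ((max (hA.eigenvalues i) 0 : ℝ) : ℂ)) *
    star (hA.eigenvectorUnitary : Matrix (Fin n) (Fin n) ℂ)

def Matrix.IsHermitian.traceNorm {n : ℕ} {A : Matrix (Fin n) (Fin n) ℂ}
    (hA : A.IsHermitian) : ℝ :=
  ∑ i, |hA.eigenvalues i|

def Matrix.IsDensity {n : ℕ} (ρ : Matrix (Fin n) (Fin n) ℂ) : Prop :=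
  ρ.PosSemidef ∧ ρ.trace = 1

lemma Matrix.IsHermitian.sub_real_smul {n : ℕ} {ρ₁ ρ₂ : Matrix (Fin n) (Fin n) ℂ}
    (h₁ : ρ₁.IsHermitian) (h₂ : ρ₂.IsHermitian) (t : ℝ) :
    (ρ₁ - (t : ℂ) • ρ₂).IsHermitian := by
  have : ((t : ℂ) • ρ₂).IsHermitian := by
    simp [Matrix.IsHermitian, Matrix.conjTranspose_smul, h₂.eq, Complex.star_def,
      Complex.conj_ofReal]
  exact h₁.sub this

/-- The support projection of the positive part of a Hermitian matrix: the spectral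
projection onto the eigenspaces with positive eigenvalues. -/
def Matrix.IsHermitian.posSupport {n : ℕ} {A : Matrix (Fin n) (Fin n) ℂ}
    (hA : A.IsHermitian) : Matrix (Fin n) (Fin n) ℂ :=
  (hA.eigenvectorUnitary : Matrix (Fin n) (Fin n) ℂ) *
    Matrix.diagonal (fun i => if 0 < hA.eigenvalues i then (1 : ℂ) else 0) *
    star (hA.eigenvectorUnitary : Matrix (Fin n) (Fin n) ℂ)

def Matrix.IsHermitian.kerProj {n : ℕ} {A : Matrix (Fin n) (Fin n) ℂ}
    (hA : A.IsHermitian) : Matrix (Fin n) (Fin n) ℂ :=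
  (hA.eigenvectorUnitary : Matrix (Fin n) (Fin n) ℂ) *
    Matrix.diagonal (fun i => if hA.eigenvalues i = 0 then (1 : ℂ) else 0) *
    star (hA.eigenvectorUnitary : Matrix (Fin n) (Fin n) ℂ)

section LinearOrderedRing

variable {R : Type*} [Ring R] [LinearOrder R] [IsStrictOrderedRing R]

lemma mul_le_max_zero {d x : R} (hx₀ : 0 ≤ x) (hx₁ : x ≤ 1) : d * x ≤ max d 0 := by
  rcases le_or_gt d 0 with hd | hd
  · exact (mul_nonpos_of_nonpos_of_nonneg hd hx₀).trans (le_max_right _ _)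
  · exact (mul_le_of_le_one_right hd.le hx₁).trans (le_max_left _ _)

lemma mul_eq_max_zero_iff {d x : R} :
    d * x = max d 0 ↔ (0 < d → x = 1) ∧ (d < 0 → x = 0) := by
  rcases lt_trichotomy d 0 with hd | rfl | hd
  · simp [hd, hd.not_gt, max_eq_right hd.le, hd.ne]
  · simp
  · simp [hd, hd.not_gt, max_eq_left hd.le, hd.ne']

lemma sum_mul_eq_sum_max_zero_iff {ι : Type*} [Fintype ι] {d x : ι → R}
    (hx₀ : ∀ i, 0 ≤ x i) (hx₁ : ∀ i, x i ≤ 1) :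
    ∑ i, d i * x i = ∑ i, max (d i) 0 ↔ ∀ i, (0 < d i → x i = 1) ∧ (d i < 0 → x i = 0) := by
  rw [Finset.sum_eq_sum_iff_of_le fun i _ ↦ mul_le_max_zero (hx₀ i) (hx₁ i)]
  simp only [Finset.mem_univ, true_implies, mul_eq_max_zero_iff]

end LinearOrderedRing

namespace Matrix

section conjStarAlgAut

variable {ι R : Type*} [Fintype ι] [DecidableEq ι] [CommRing R] [StarRing R]
  (u : unitary (Matrix ι ι R)) (x : Matrix ι ι R)

lemma trace_conjStarAlgAut : (Unitary.conjStarAlgAut R _ u x).trace = x.trace := by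
  rw [Unitary.conjStarAlgAut_apply, trace_mul_cycle, Unitary.coe_star_mul_self, one_mul]

variable [PartialOrder R] in
lemma posSemidef_conjStarAlgAut_iff :
    (Unitary.conjStarAlgAut R _ u x).PosSemidef ↔ x.PosSemidef :=
  Unitary.isUnit_coe.posSemidef_star_right_conjugate_iff

end conjStarAlgAut

variable {ι 𝕜 : Type*} [Fintype ι] [DecidableEq ι] [RCLike 𝕜] {N : Matrix ι ι 𝕜}

lemma PosSemidef.apply_eq_zero_of_diag_eq_zero (hN : N.PosSemidef) {i : ι} (h : N i i = 0)
    (j : ι) : N i j = 0 := by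
  have hcol : N *ᵥ Pi.single i 1 = 0 :=
    (hN.dotProduct_mulVec_zero_iff _).1 (by simpa [mulVec_single, dotProduct_single] using h)
  have hji : N j i = 0 := by simpa [mulVec_single] using congrFun hcol j
  rw [← hN.isHermitian.apply, hji, star_zero]

lemma PosSemidef.apply_eq_one_apply_of_diag_eq_one (hN : (1 - N).PosSemidef) {i : ι}
    (h : N i i = 1) (j : ι) : N i j = (1 : Matrix ι ι 𝕜) i j := by
  have := hN.apply_eq_zero_of_diag_eq_zero (i := i) (by simp [h]) j
  rwa [sub_apply, sub_eq_zero, eq_comm] at this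

omit [Fintype ι] [DecidableEq ι] in
lemma PosSemidef.ofReal_re_diag (hN : N.PosSemidef) (i : ι) : (RCLike.re (N i i) : 𝕜) = N i i :=
  RCLike.conj_eq_iff_re.1 (hN.isHermitian.apply i i)

omit [Fintype ι] in
lemma PosSemidef.re_diag_le_one (hN : (1 - N).PosSemidef) (i : ι) : RCLike.re (N i i) ≤ 1 := by
  have := RCLike.nonneg_iff.1 (hN.diag_nonneg (i := i))
  simpa [sub_apply] using this.1

variable (𝕜) in
def posSupportDiagonal (d : ι → ℝ) : Matrix ι ι 𝕜 := diagonal fun i ↦ if 0 < d i then 1 else 0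

variable (𝕜) in
def kerProjDiagonal (d : ι → ℝ) : Matrix ι ι 𝕜 := diagonal fun i ↦ if d i = 0 then 1 else 0

variable {d : ι → ℝ}

omit [Fintype ι] in
lemma isHermitian_posSupportDiagonal : (posSupportDiagonal 𝕜 d).IsHermitian :=
  isHermitian_diagonal_of_self_adjoint _ <| by ext i; simp [apply_ite]

omit [Fintype ι] in
lemma isHermitian_kerProjDiagonal : (kerProjDiagonal 𝕜 d).IsHermitian :=
  isHermitian_diagonal_of_self_adjoint _ <| by ext i; simp [apply_ite]

lemma trace_diagonal_mul_eq_sum_max_zero_iff (hN₀ : N.PosSemidef) (hN₁ : (1 - N).PosSemidef) :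
    (diagonal (fun i ↦ (d i : 𝕜)) * N).trace = ∑ i, ((max (d i) 0 : ℝ) : 𝕜) ↔
      ∀ i, (0 < d i → N i i = 1) ∧ (d i < 0 → N i i = 0) := by
  have hre := hN₀.ofReal_re_diag
  have htrace : (diagonal (fun i ↦ (d i : 𝕜)) * N).trace =
      ((∑ i, d i * RCLike.re (N i i) : ℝ) : 𝕜) := by
    simp [trace, diagonal_mul, hre]
  have hcast (i : ι) (r : ℝ) : RCLike.re (N i i) = r ↔ N i i = r := by
    rw [← hre i, RCLike.ofReal_re, RCLike.ofReal_inj]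
  rw [htrace, ← RCLike.ofReal_sum, RCLike.ofReal_inj, sum_mul_eq_sum_max_zero_iff
    (fun i ↦ (RCLike.nonneg_iff.1 hN₀.diag_nonneg).1) hN₁.re_diag_le_one]
  simp only [hcast, RCLike.ofReal_one, RCLike.ofReal_zero]

lemma apply_eq_posSupportDiagonal_apply_of_ne_zero (hN₀ : N.PosSemidef)
    (hN₁ : (1 - N).PosSemidef) (hd : ∀ i, (0 < d i → N i i = 1) ∧ (d i < 0 → N i i = 0))
    (i : ι) (hi : d i ≠ 0) (j : ι) : N i j = posSupportDiagonal 𝕜 d i j := by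
  rcases hi.lt_or_gt with hneg | hpos
  · rw [hN₀.apply_eq_zero_of_diag_eq_zero ((hd i).2 hneg)]
    simp [posSupportDiagonal, diagonal_apply, hneg.not_gt]
  · rw [hN₁.apply_eq_one_apply_of_diag_eq_one ((hd i).1 hpos)]
    simp [posSupportDiagonal, diagonal_apply, one_apply, hpos]

lemma eq_posSupportDiagonal_add_kerProjDiagonal_mul (hN₀ : N.PosSemidef)
    (hN₁ : (1 - N).PosSemidef) (hd : ∀ i, (0 < d i → N i i = 1) ∧ (d i < 0 → N i i = 0)) :
    N = posSupportDiagonal 𝕜 d + kerProjDiagonal 𝕜 d * N * kerProjDiagonal 𝕜 d := by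
  have hrow := apply_eq_posSupportDiagonal_apply_of_ne_zero hN₀ hN₁ hd
  ext i j
  simp only [add_apply, kerProjDiagonal, diagonal_mul, mul_diagonal]
  by_cases hi : d i = 0
  · by_cases hj : d j = 0
    · simp [posSupportDiagonal, diagonal_apply, hi, hj]
    · have hcol : N i j = posSupportDiagonal 𝕜 d i j := by
        rw [← hN₀.isHermitian.apply, hrow j hj i, isHermitian_posSupportDiagonal.apply]
      simp [hj, hcol]
  · simp [hi, hrow i hi j]

theorem trace_diagonal_mul_eq_sum_max_zero_iff_exists (hN₀ : N.PosSemidef)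
    (hN₁ : (1 - N).PosSemidef) :
    (diagonal (fun i ↦ (d i : 𝕜)) * N).trace = ∑ i, ((max (d i) 0 : ℝ) : 𝕜) ↔
      ∃ Y : Matrix ι ι 𝕜, Y.PosSemidef ∧ (kerProjDiagonal 𝕜 d - Y).PosSemidef ∧
        N = posSupportDiagonal 𝕜 d + Y := by
  rw [trace_diagonal_mul_eq_sum_max_zero_iff hN₀ hN₁]
  constructor
  · intro hd
    set K := kerProjDiagonal 𝕜 d
    have hK : Kᴴ = K := isHermitian_kerProjDiagonal
    have hKK : K * K = K := by simp [K, kerProjDiagonal, diagonal_mul_diagonal]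
    refine ⟨K * N * K, ?_, ?_, eq_posSupportDiagonal_add_kerProjDiagonal_mul hN₀ hN₁ hd⟩
    · simpa [hK] using hN₀.mul_mul_conjTranspose_same K
    · have hcompl : K - K * N * K = K * (1 - N) * Kᴴ := by
        rw [hK, mul_sub, sub_mul, mul_one, hKK]
      rw [hcompl]
      exact hN₁.mul_mul_conjTranspose_same K
  · rintro ⟨Y, hY₀, hY₁, rfl⟩ i
    have hYi : d i ≠ 0 → Y i i = 0 := fun hi ↦
      le_antisymm (by simpa [kerProjDiagonal, hi] using hY₁.diag_nonneg (i := i)) hY₀.diag_nonneg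
    exact ⟨fun h ↦ by simp [posSupportDiagonal, h, hYi h.ne'],
      fun h ↦ by simp [posSupportDiagonal, h.not_gt, hYi h.ne]⟩

end Matrix

theorem Matrix.IsHermitian.trace_mul_eq_trace_posPart_iff {n : ℕ}
    {A : Matrix (Fin n) (Fin n) ℂ} (hA : A.IsHermitian) {M : Matrix (Fin n) (Fin n) ℂ}
    (hM₀ : M.PosSemidef) (hM₁ : (1 - M).PosSemidef) :
    (A * M).trace = hA.posPart.trace ↔
      ∃ X : Matrix (Fin n) (Fin n) ℂ, X.PosSemidef ∧ (hA.kerProj - X).PosSemidef ∧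
        M = hA.posSupport + X := by
  set φ := Unitary.conjStarAlgAut ℂ _ hA.eigenvectorUnitary
  obtain ⟨N, rfl⟩ : ∃ N, φ N = M := ⟨φ.symm M, φ.apply_symm_apply M⟩
  have htrace : (A * φ N).trace = (diagonal (fun i ↦ (hA.eigenvalues i : ℂ)) * N).trace := by
    conv_lhs => rw [hA.spectral_theorem]
    rw [← map_mul, trace_conjStarAlgAut]
    rfl
  have hposPart : hA.posPart = φ (diagonal fun i ↦ ((max (hA.eigenvalues i) 0 : ℝ) : ℂ)) := rfl
  have hposSupport : hA.posSupport = φ (posSupportDiagonal ℂ hA.eigenvalues) := rfl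
  have hkerProj : hA.kerProj = φ (kerProjDiagonal ℂ hA.eigenvalues) := rfl
  rw [posSemidef_conjStarAlgAut_iff] at hM₀
  rw [← map_one φ, ← map_sub, posSemidef_conjStarAlgAut_iff] at hM₁
  rw [htrace, hposPart, trace_conjStarAlgAut, trace_diagonal]
  refine (trace_diagonal_mul_eq_sum_max_zero_iff_exists (d := hA.eigenvalues) hM₀ hM₁).trans ?_
  rw [hposSupport, hkerProj]
  conv_rhs => rw [(EquivLike.surjective φ).exists]
  refine exists_congr fun Y ↦ ?_
  rw [← map_sub, ← map_add, posSemidef_conjStarAlgAut_iff, posSemidef_conjStarAlgAut_iff,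
    EmbeddingLike.apply_eq_iff_eq]

theorem quantum_neyman_pearson_general {n : ℕ} (ρ₁ ρ₂ : Matrix (Fin n) (Fin n) ℂ)
    (h₁ : ρ₁.IsDensity) (h₂ : ρ₂.IsDensity) (t : ℝ)
    (M : Matrix (Fin n) (Fin n) ℂ) (hM₀ : M.PosSemidef) (hM₁ : (1 - M).PosSemidef) :
    ((ρ₁ - (t : ℂ) • ρ₂) * M).trace = ((h₁.1.1.sub_real_smul h₂.1.1 t).posPart).trace ↔
      ∃ X : Matrix (Fin n) (Fin n) ℂ, X.PosSemidef ∧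
        ((h₁.1.1.sub_real_smul h₂.1.1 t).kerProj - X).PosSemidef ∧
        M = (h₁.1.1.sub_real_smul h₂.1.1 t).posSupport + X :=
  (h₁.1.1.sub_real_smul h₂.1.1 t).trace_mul_eq_trace_posPart_iff hM₀ hM₁

/-- Quantum Neyman–Pearson lemma: a test `0 ≤ M ≤ I` attains
`Tr((ρ₁ - tρ₂)M) = Tr((ρ₁ - tρ₂)₊)` iff `M = P₊ + X` with `0 ≤ X ≤ P₀`. -/
theorem quantum_neyman_pearson {n : ℕ} (ρ₁ ρ₂ : Matrix (Fin n) (Fin n) ℂ)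
    (h₁ : ρ₁.IsDensity) (h₂ : ρ₂.IsDensity) (t : ℝ) (ht : 0 ≤ t)
    (M : Matrix (Fin n) (Fin n) ℂ) (hM₀ : M.PosSemidef) (hM₁ : (1 - M).PosSemidef) :
    ((ρ₁ - (t : ℂ) • ρ₂) * M).trace = ((h₁.1.1.sub_real_smul h₂.1.1 t).posPart).trace ↔
      ∃ X : Matrix (Fin n) (Fin n) ℂ, X.PosSemidef ∧
        ((h₁.1.1.sub_real_smul h₂.1.1 t).kerProj - X).PosSemidef ∧
        M = (h₁.1.1.sub_real_smul h₂.1.1 t).posSupport + X :=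
  quantum_neyman_pearson_general ρ₁ ρ₂ h₁ h₂ t M hM₀ hM₁
end
end

section
/- Let ρ₁, ρ₂ and σ₁, σ₂ be density operators on finite-dimensional Hilbert spaces, and let T be a positive trace-preserving linear map with T(ρᵢ) = σᵢ for i = 1, 2. Then for every t ≥ 0, ‖ρ₁ - tρ₂‖₁ ≥ ‖σ₁ - tσ₂‖₁. -/
open Matrix BigOperators
open scoped ComplexOrder

noncomputable section

/-!
Write `A = A₊ - A₋` with `A₊ = hA.posPart` and `A₋ = A₊ - A`, both positive semidefinite,
so that `‖A‖₁ = tr A₊ + tr A₋`. Then `T A = T A₊ - T A₋` is again a difference of positive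
semidefinite matrices with the same total trace, and any such decomposition `B = P - Q`
satisfies `‖B‖₁ ≤ tr P + tr Q`: in the eigenbasis of `B`, each eigenvalue is the difference
of the (nonnegative) diagonal entries of `P` and `Q`. Apply this to `A = ρ₁ - t ρ₂`.
-/

open Unitary

namespace Matrix

section

variable {ι R : Type*} [Fintype ι] [DecidableEq ι] [CommRing R] [StarRing R]

theorem trace_conjStarAlgAut_s11 (u : unitary (Matrix ι ι R)) (A : Matrix ι ι R) :
    (conjStarAlgAut R _ u A).trace = A.trace := by
  rw [conjStarAlgAut_apply, trace_mul_cycle, coe_star_mul_self, one_mul]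

theorem PosSemidef.conjStarAlgAut [PartialOrder R] {A : Matrix ι ι R} (hA : A.PosSemidef)
    (u : unitary (Matrix ι ι R)) : (conjStarAlgAut R _ u A).PosSemidef := by
  rw [conjStarAlgAut_apply, star_eq_conjTranspose]
  exact hA.mul_mul_conjTranspose_same (u : Matrix ι ι R)

end

namespace IsHermitian

variable {n : ℕ} {A : Matrix (Fin n) (Fin n) ℂ} (hA : A.IsHermitian)

theorem posPart_eq : hA.posPart = conjStarAlgAut ℂ _ hA.eigenvectorUnitary
    (diagonal fun i => ((max (hA.eigenvalues i) 0 : ℝ) : ℂ)) :=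
  (conjStarAlgAut_apply _ _).symm

theorem posSemidef_posPart : hA.posPart.PosSemidef := by
  rw [posPart_eq]
  refine (PosSemidef.diagonal fun i => ?_).conjStarAlgAut _
  exact Complex.zero_le_real.mpr (le_max_right _ _)

theorem posSemidef_posPart_sub : (hA.posPart - A).PosSemidef := by
  have hdiag : hA.posPart - A = conjStarAlgAut ℂ _ hA.eigenvectorUnitary
      (diagonal fun i => ((max (hA.eigenvalues i) 0 - hA.eigenvalues i : ℝ) : ℂ)) :=
    calc hA.posPart - A
        = conjStarAlgAut ℂ _ hA.eigenvectorUnitary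
            (diagonal fun i => ((max (hA.eigenvalues i) 0 : ℝ) : ℂ)) -
          conjStarAlgAut ℂ _ hA.eigenvectorUnitary
            (diagonal (RCLike.ofReal ∘ hA.eigenvalues)) :=
          congrArg (hA.posPart - ·) hA.spectral_theorem
      _ = _ := by
        rw [← map_sub, diagonal_sub]
        simp
  rw [hdiag]
  refine (PosSemidef.diagonal fun i => ?_).conjStarAlgAut _
  exact Complex.zero_le_real.mpr (sub_nonneg.mpr (le_max_left _ _))

theorem traceNorm_eq_re_trace_posPart_add :
    hA.traceNorm = (hA.posPart.trace + (hA.posPart - A).trace).re := by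
  rw [trace_sub, hA.trace_eq_sum_eigenvalues, posPart_eq, trace_conjStarAlgAut_s11, trace_diagonal]
  simp only [Complex.add_re, Complex.sub_re, Complex.re_sum, Complex.ofReal_re,
    RCLike.ofReal_eq_complex_ofReal, traceNorm, ← Finset.sum_add_distrib,
    ← Finset.sum_sub_distrib]
  refine Finset.sum_congr rfl fun i _ => ?_
  rcases le_total (hA.eigenvalues i) 0 with h | h
  · rw [abs_of_nonpos h, max_eq_right h]; ring
  · rw [abs_of_nonneg h, max_eq_left h]; ring

theorem traceNorm_le_re_trace_add_of_eq_sub {P Q : Matrix (Fin n) (Fin n) ℂ}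
    (hP : P.PosSemidef) (hQ : Q.PosSemidef) (hAPQ : A = P - Q) :
    hA.traceNorm ≤ (P.trace + Q.trace).re := by
  subst hAPQ
  set toEigenbasis := conjStarAlgAut ℂ _ (star hA.eigenvectorUnitary)
  have diag_re_nonneg {M : Matrix (Fin n) (Fin n) ℂ} (hM : M.PosSemidef) (i : Fin n) :
      0 ≤ (toEigenbasis M i i).re :=
    (Complex.le_def.mp ((hM.conjStarAlgAut _).diag_nonneg (i := i))).1
  have eigenvalues_eq (i : Fin n) :
      hA.eigenvalues i = (toEigenbasis P i i).re - (toEigenbasis Q i i).re := by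
    rw [← Complex.sub_re, ← sub_apply, ← map_sub, hA.conjStarAlgAut_star_eigenvectorUnitary,
      diagonal_apply_eq, Function.comp_apply, RCLike.ofReal_eq_complex_ofReal, Complex.ofReal_re]
  calc hA.traceNorm = ∑ i, |(toEigenbasis P i i).re - (toEigenbasis Q i i).re| := by
        simp only [traceNorm, eigenvalues_eq]
    _ ≤ ∑ i, ((toEigenbasis P i i).re + (toEigenbasis Q i i).re) := by
        refine Finset.sum_le_sum fun i _ => abs_sub_le_iff.mpr ⟨?_, ?_⟩ <;>
          linarith [diag_re_nonneg hP i, diag_re_nonneg hQ i]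
    _ = (P.trace + Q.trace).re := by
        rw [← trace_conjStarAlgAut_s11 (star hA.eigenvectorUnitary) P,
          ← trace_conjStarAlgAut_s11 (star hA.eigenvectorUnitary) Q, Complex.add_re, trace, trace,
          Complex.re_sum, Complex.re_sum, Finset.sum_add_distrib]
        rfl

theorem traceNorm_le_of_map_eq {m : ℕ}
    (T : Matrix (Fin n) (Fin n) ℂ →ₗ[ℂ] Matrix (Fin m) (Fin m) ℂ)
    (hpos : ∀ M, M.PosSemidef → (T M).PosSemidef) (htr : ∀ M, (T M).trace = M.trace)
    {B : Matrix (Fin m) (Fin m) ℂ} (hB : B.IsHermitian) (hTA : T A = B) :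
    hB.traceNorm ≤ hA.traceNorm := by
  subst hTA
  calc hB.traceNorm ≤ ((T hA.posPart).trace + (T (hA.posPart - A)).trace).re :=
        traceNorm_le_re_trace_add_of_eq_sub hB (hpos _ hA.posSemidef_posPart)
          (hpos _ hA.posSemidef_posPart_sub) (by rw [← map_sub, sub_sub_cancel])
    _ = hA.traceNorm := by rw [htr, htr, hA.traceNorm_eq_re_trace_posPart_add]

end IsHermitian

end Matrix

/-- A positive trace-preserving map mapping `ρᵢ` to `σᵢ` contracts the trace-norm
distance `‖ρ₁ - tρ₂‖₁ ≥ ‖σ₁ - tσ₂‖₁` for all `t ≥ 0`. -/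
theorem traceNorm_ge_of_positive_trace_preserving {n m : ℕ}
    (ρ₁ ρ₂ : Matrix (Fin n) (Fin n) ℂ) (σ₁ σ₂ : Matrix (Fin m) (Fin m) ℂ)
    (hρ₁ : ρ₁.IsDensity) (hρ₂ : ρ₂.IsDensity)
    (hσ₁ : σ₁.IsDensity) (hσ₂ : σ₂.IsDensity)
    (T : Matrix (Fin n) (Fin n) ℂ →ₗ[ℂ] Matrix (Fin m) (Fin m) ℂ)
    (hpos : ∀ A : Matrix (Fin n) (Fin n) ℂ, A.PosSemidef → (T A).PosSemidef)
    (htr : ∀ A : Matrix (Fin n) (Fin n) ℂ, (T A).trace = A.trace)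
    (h1 : T ρ₁ = σ₁) (h2 : T ρ₂ = σ₂) :
    ∀ t : ℝ, 0 ≤ t →
      (hσ₁.1.1.sub_real_smul hσ₂.1.1 t).traceNorm ≤
        (hρ₁.1.1.sub_real_smul hρ₂.1.1 t).traceNorm := by
  intro t _
  exact (hρ₁.1.1.sub_real_smul hρ₂.1.1 t).traceNorm_le_of_map_eq T hpos htr _
    (by rw [map_sub, map_smul, h1, h2])
end
end

section
/- Let f : [0, ∞) → ℝ be convex, nonincreasing, with f(0) = 1 and f(t) ≥ max(1-t, 0), differentiable at two points 0 < s₁ < s₂. Then there exists a classical binary experiment on a three-point set, i.e., probability distributions p, q on {1,2,3}, such that g(t) := Σ_{i : p_i - t q_i > 0} (p_i - t q_i) satisfies g(t) ≤ f(t) for all t ≥ 0 and g(sᵢ) = f(sᵢ) for i = 1, 2. -/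
/-!
The tangent lines `cₖ - aₖ t` of `f` at `s₁` and `s₂`, together with `1 - t` and `0`, are four
supporting lines of `f` with slopes `1 ≥ a₁ ≥ a₂ ≥ 0`. Take for `p` and `q` the successive
increments of the intercepts `1, c₁, c₂, 0` and of the slopes `1, a₁, a₂, 0`: then `pᵢ - t qᵢ` is
the difference of two consecutive lines. Consecutive lines cross in the order `s₁ < s₂`, so the
positive terms always form a final segment and the sum of positive parts is
`max (1 - t, c₁ - a₁ t, c₂ - a₂ t, 0)`, which lies below `f` and touches it at `s₁` and `s₂`.
-/

open Finset

lemma ConvexOn.add_deriv_mul_sub_le {S : Set ℝ} {f : ℝ → ℝ} (hf : ConvexOn ℝ S f) {x y : ℝ}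
    (hx : x ∈ S) (hy : y ∈ S) (hfx : DifferentiableAt ℝ f x) :
    f x + deriv f x * (y - x) ≤ f y := by
  rcases lt_trichotomy x y with hxy | rfl | hyx
  · have h := hf.deriv_le_slope hx hy hxy hfx
    rw [slope_def_field, le_div_iff₀ (sub_pos.2 hxy)] at h
    linarith
  · simp
  · have h := hf.slope_le_deriv hy hx hyx hfx
    rw [slope_def_field, div_le_iff₀ (sub_pos.2 hyx)] at h
    linarith

lemma sum_filter_pos_eq_max {x : Fin 3 → ℝ} (h₀₁ : 0 < x 0 → 0 ≤ x 1)
    (h₀₂ : 0 < x 0 → 0 ≤ x 2) (h₁₂ : 0 < x 1 → 0 ≤ x 2) :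
    ∑ i ∈ univ.filter (fun i => 0 < x i), x i =
      max (max (x 0 + x 1 + x 2) (x 1 + x 2)) (max (x 2) 0) := by
  rw [sum_filter, Fin.sum_univ_three]
  grind

lemma sub_mul_nonneg_of_pos_of_crossing {p q p' q' s t : ℝ} (hq : 0 ≤ q) (hq' : 0 ≤ q')
    (hs : p - s * q ≤ 0) (hs' : 0 ≤ p' - s * q') (ht : 0 < p - t * q) : 0 ≤ p' - t * q' := by
  have hts : t < s := by
    by_contra! hst
    nlinarith [mul_le_mul_of_nonneg_right hst hq]
  nlinarith [mul_le_mul_of_nonneg_right hts.le hq']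

def chainIncrements (x₁ x₂ : ℝ) : Fin 3 → ℝ := ![1 - x₁, x₁ - x₂, x₂]

lemma sum_chainIncrements (x₁ x₂ : ℝ) : ∑ i, chainIncrements x₁ x₂ i = 1 := by
  simp [chainIncrements, Fin.sum_univ_three]

lemma chainIncrements_nonneg {x₁ x₂ : ℝ} (h₁ : x₁ ≤ 1) (h₁₂ : x₂ ≤ x₁) (h₂ : 0 ≤ x₂) (i : Fin 3) :
    0 ≤ chainIncrements x₁ x₂ i := by
  fin_cases i
  exacts [sub_nonneg.2 h₁, sub_nonneg.2 h₁₂, h₂]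

lemma sum_filter_pos_chainIncrements_eq_max {c₁ c₂ a₁ a₂ s₁ s₂ : ℝ}
    (ha₁ : a₁ ≤ 1) (ha₁₂ : a₂ ≤ a₁) (ha₂ : 0 ≤ a₂) (hs : s₁ ≤ s₂)
    (h₁₀ : 1 - s₁ ≤ c₁ - a₁ * s₁) (h₁₂ : c₂ - a₂ * s₁ ≤ c₁ - a₁ * s₁)
    (h₂₁ : c₁ - a₁ * s₂ ≤ c₂ - a₂ * s₂) (h₂₃ : 0 ≤ c₂ - a₂ * s₂) (t : ℝ) :
    ∑ i ∈ univ.filter (fun i => 0 < chainIncrements c₁ c₂ i - t * chainIncrements a₁ a₂ i),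
        (chainIncrements c₁ c₂ i - t * chainIncrements a₁ a₂ i) =
      max (max (1 - t) (c₁ - a₁ * t)) (max (c₂ - a₂ * t) 0) := by
  have hq := chainIncrements_nonneg ha₁ ha₁₂ ha₂
  have hx₀s₁ : (1 - c₁) - s₁ * (1 - a₁) ≤ 0 := by linarith
  have hx₁s₁ : 0 ≤ (c₁ - c₂) - s₁ * (a₁ - a₂) := by linarith
  have hx₁s₂ : (c₁ - c₂) - s₂ * (a₁ - a₂) ≤ 0 := by linarith
  have hx₂s₂ : 0 ≤ c₂ - s₂ * a₂ := by linarith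
  have hx₂s₁ : 0 ≤ c₂ - s₁ * a₂ := by nlinarith [mul_le_mul_of_nonneg_left hs ha₂]
  refine (sum_filter_pos_eq_max ?_ ?_ ?_).trans ?_
  · exact sub_mul_nonneg_of_pos_of_crossing (hq 0) (hq 1) hx₀s₁ hx₁s₁
  · exact sub_mul_nonneg_of_pos_of_crossing (hq 0) (hq 2) hx₀s₁ hx₂s₁
  · exact sub_mul_nonneg_of_pos_of_crossing (hq 1) (hq 2) hx₁s₂ hx₂s₂
  · congr 2 <;> (dsimp [chainIncrements]; ring)

theorem exists_three_point_experiment_of_supporting_lines (F : ℝ → ℝ)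
    (hanti : AntitoneOn F (Set.Ici 0)) (hF0 : F 0 ≤ 1)
    (hFge : ∀ t : ℝ, 0 ≤ t → max (1 - t) 0 ≤ F t)
    {s₁ s₂ c₁ a₁ c₂ a₂ : ℝ} (hs₁ : 0 < s₁) (hs₁₂ : s₁ < s₂)
    (hℓ₁ : ∀ t, 0 ≤ t → c₁ - a₁ * t ≤ F t) (hℓ₂ : ∀ t, 0 ≤ t → c₂ - a₂ * t ≤ F t)
    (h₁ : c₁ - a₁ * s₁ = F s₁) (h₂ : c₂ - a₂ * s₂ = F s₂) :
    ∃ p q : Fin 3 → ℝ,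
      (∀ i, 0 ≤ p i) ∧ (∀ i, 0 ≤ q i) ∧ (∑ i, p i = 1) ∧ (∑ i, q i = 1) ∧
      (∀ t : ℝ, 0 ≤ t →
        ∑ i ∈ univ.filter (fun i => 0 < p i - t * q i), (p i - t * q i) ≤ F t) ∧
      (∑ i ∈ univ.filter (fun i => 0 < p i - s₁ * q i), (p i - s₁ * q i) = F s₁) ∧
      (∑ i ∈ univ.filter (fun i => 0 < p i - s₂ * q i), (p i - s₂ * q i) = F s₂) := by
  have hs₂ : 0 < s₂ := hs₁.trans hs₁₂
  have hF1 : ∀ t, 0 ≤ t → 1 - t ≤ F t := fun t ht => (le_max_left _ _).trans (hFge t ht)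
  have hFnonneg : ∀ t, 0 ≤ t → 0 ≤ F t := fun t ht => (le_max_right _ _).trans (hFge t ht)
  have hc₁ : c₁ ≤ 1 := by linarith [hℓ₁ 0 le_rfl]
  have ha₁ : a₁ ≤ 1 := by nlinarith [hF1 s₁ hs₁.le]
  have ha₁₂ : a₂ ≤ a₁ := by nlinarith [hℓ₁ s₂ hs₂.le, hℓ₂ s₁ hs₁.le]
  have ha₂ : 0 ≤ a₂ := by
    have := hanti (Set.mem_Ici.2 hs₂.le) (Set.mem_Ici.2 (by linarith : 0 ≤ s₂ + 1)) (by linarith)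
    nlinarith [hℓ₂ (s₂ + 1) (by linarith)]
  have hc₁₂ : c₂ ≤ c₁ := by nlinarith [hℓ₂ s₁ hs₁.le]
  have hc₂ : 0 ≤ c₂ := by nlinarith [hFnonneg s₂ hs₂.le]
  have hg := sum_filter_pos_chainIncrements_eq_max ha₁ ha₁₂ ha₂ hs₁₂.le
    (h₁ ▸ hF1 s₁ hs₁.le) (h₁ ▸ hℓ₂ s₁ hs₁.le) (h₂ ▸ hℓ₁ s₂ hs₂.le) (h₂ ▸ hFnonneg s₂ hs₂.le)
  have hle : ∀ t, 0 ≤ t → max (max (1 - t) (c₁ - a₁ * t)) (max (c₂ - a₂ * t) 0) ≤ F t :=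
    fun t ht => max_le (max_le (hF1 t ht) (hℓ₁ t ht)) (max_le (hℓ₂ t ht) (hFnonneg t ht))
  refine ⟨chainIncrements c₁ c₂, chainIncrements a₁ a₂, chainIncrements_nonneg hc₁ hc₁₂ hc₂,
    chainIncrements_nonneg ha₁ ha₁₂ ha₂, sum_chainIncrements c₁ c₂, sum_chainIncrements a₁ a₂,
    fun t ht => (hg t).trans_le (hle t ht), ?_, ?_⟩
  · rw [hg]
    exact (hle s₁ hs₁.le).antisymm (h₁ ▸ le_max_of_le_left (le_max_right _ _))
  · rw [hg]
    exact (hle s₂ hs₂.le).antisymm (h₂ ▸ le_max_of_le_right (le_max_left _ _))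

/-- Given a convex, nonincreasing function `f` on `[0,∞)` with `f(0) = 1` and
`f(t) ≥ max (1-t) 0`, differentiable at `0 < s₁ < s₂`, there is a classical binary
experiment `(p, q)` on a three-point set whose function
`g(t) = ∑_{i : pᵢ - t qᵢ > 0} (pᵢ - t qᵢ)` is dominated by `f` on `[0,∞)` and touches
it at `s₁` and `s₂`. -/
theorem exists_three_point_experiment (f : ℝ → ℝ)
    (hconv : ConvexOn ℝ (Set.Ici (0 : ℝ)) f)
    (hmono : AntitoneOn f (Set.Ici (0 : ℝ)))
    (hf0 : f 0 = 1)
    (hfge : ∀ t : ℝ, 0 ≤ t → max (1 - t) 0 ≤ f t)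
    (s₁ s₂ : ℝ) (hs₁ : 0 < s₁) (hs₁₂ : s₁ < s₂)
    (hd₁ : DifferentiableAt ℝ f s₁) (hd₂ : DifferentiableAt ℝ f s₂) :
    ∃ p q : Fin 3 → ℝ,
      (∀ i, 0 ≤ p i) ∧ (∀ i, 0 ≤ q i) ∧ (∑ i, p i = 1) ∧ (∑ i, q i = 1) ∧
      (∀ t : ℝ, 0 ≤ t →
        ∑ i ∈ Finset.univ.filter (fun i => 0 < p i - t * q i), (p i - t * q i) ≤ f t) ∧
      (∑ i ∈ Finset.univ.filter (fun i => 0 < p i - s₁ * q i), (p i - s₁ * q i) = f s₁) ∧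
      (∑ i ∈ Finset.univ.filter (fun i => 0 < p i - s₂ * q i), (p i - s₂ * q i) = f s₂) := by
  have hs₂ : 0 < s₂ := hs₁.trans hs₁₂
  refine exists_three_point_experiment_of_supporting_lines f hmono hf0.le hfge hs₁ hs₁₂
    (c₁ := f s₁ - deriv f s₁ * s₁) (a₁ := -deriv f s₁)
    (c₂ := f s₂ - deriv f s₂ * s₂) (a₂ := -deriv f s₂) ?_ ?_ (by ring) (by ring)
  · intro t ht
    linear_combination hconv.add_deriv_mul_sub_le (Set.mem_Ici.2 hs₁.le) (Set.mem_Ici.2 ht) hd₁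
  · intro t ht
    linear_combination hconv.add_deriv_mul_sub_le (Set.mem_Ici.2 hs₂.le) (Set.mem_Ici.2 ht) hd₂
end

section
/- Let ρ₁, ρ₂, σ₁, σ₂ be density operators. Suppose that for every real t ≥ 0, ‖ρ₁ - tρ₂‖₁ ≥ ‖σ₁ - tσ₂‖₁. Then the linear map L defined on span{ρ₁, ρ₂} by L(a₁ρ₁ + a₂ρ₂) = a₁σ₁ + a₂σ₂ is well defined and satisfies ‖L(x)‖₁ ≤ ‖x‖₁ for all x in span{ρ₁, ρ₂} with real coefficients. -/
/-! The trace norm is absolutely homogeneous and equals the trace on positive semidefinite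
matrices. So when `a₁, a₂` have the same sign both sides equal `|a₁| + |a₂|`, the states having
unit trace; otherwise `a₁ρ₁ + a₂ρ₂ = a₁(ρ₁ - tρ₂)` with `t = -a₂/a₁ ≥ 0`, and the claim is the
hypothesis at `t` scaled by `|a₁|`. -/

open Matrix BigOperators
open scoped ComplexOrder

noncomputable section

/-- Real linear combinations of Hermitian matrices are Hermitian. -/
lemma Matrix.IsHermitian.real_combo {n : ℕ} {ρ₁ ρ₂ : Matrix (Fin n) (Fin n) ℂ}
    (h₁ : ρ₁.IsHermitian) (h₂ : ρ₂.IsHermitian) (a₁ a₂ : ℝ) :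
    ((a₁ : ℂ) • ρ₁ + (a₂ : ℂ) • ρ₂).IsHermitian := by
  have k₁ : ((a₁ : ℂ) • ρ₁).IsHermitian := by
    simp [Matrix.IsHermitian, Matrix.conjTranspose_smul, h₁.eq, Complex.star_def,
      Complex.conj_ofReal]
  have k₂ : ((a₂ : ℂ) • ρ₂).IsHermitian := by
    simp [Matrix.IsHermitian, Matrix.conjTranspose_smul, h₂.eq, Complex.star_def,
      Complex.conj_ofReal]
  exact k₁.add k₂

namespace Matrix

variable {n : ℕ}

theorem IsHermitian.traceNorm_congr {A B : Matrix (Fin n) (Fin n) ℂ} (hA : A.IsHermitian)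
    (hAB : A = B) : hA.traceNorm = (hAB ▸ hA : B.IsHermitian).traceNorm := by
  subst hAB; rfl

theorem IsHermitian.traceNorm_eq_re_trace_cfc_abs {A : Matrix (Fin n) (Fin n) ℂ}
    (hA : A.IsHermitian) : hA.traceNorm = (cfc (fun x : ℝ => |x|) A).trace.re := by
  rw [hA.cfc_eq, IsHermitian.cfc, Unitary.conjStarAlgAut_apply, trace_mul_cycle,
    Unitary.coe_star_mul_self, one_mul, trace_diagonal]
  simp [traceNorm]

theorem IsHermitian.traceNorm_real_smul {A : Matrix (Fin n) (Fin n) ℂ} (hA : A.IsHermitian)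
    (c : ℝ) (hcA : ((c : ℂ) • A).IsHermitian) : hcA.traceNorm = |c| * hA.traceNorm := by
  have habs : (fun x : ℝ => |c • x|) = fun x => |c| • |x| := by
    ext x; simp [abs_mul]
  rw [hcA.traceNorm_eq_re_trace_cfc_abs, hA.traceNorm_eq_re_trace_cfc_abs, Complex.coe_smul,
    ← cfc_comp_smul c _ A (by fun_prop) hA.isSelfAdjoint, habs, cfc_smul |c| _ A (by fun_prop),
    trace_smul, Complex.real_smul, Complex.re_ofReal_mul]

theorem PosSemidef.traceNorm_eq_re_trace {A : Matrix (Fin n) (Fin n) ℂ} (hA : A.PosSemidef) :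
    hA.1.traceNorm = A.trace.re := by
  simp [IsHermitian.traceNorm, hA.1.trace_eq_sum_eigenvalues,
    abs_of_nonneg (hA.eigenvalues_nonneg _)]

theorem IsDensity.traceNorm_real_combo_of_mul_nonneg {ρ₁ ρ₂ : Matrix (Fin n) (Fin n) ℂ}
    (hρ₁ : ρ₁.IsDensity) (hρ₂ : ρ₂.IsDensity) {a₁ a₂ : ℝ} (ha : 0 ≤ a₁ * a₂) :
    (hρ₁.1.1.real_combo hρ₂.1.1 a₁ a₂).traceNorm = |a₁| + |a₂| := by
  have of_nonneg : ∀ b₁ b₂ : ℝ, 0 ≤ b₁ → 0 ≤ b₂ →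
      (hρ₁.1.1.real_combo hρ₂.1.1 b₁ b₂).traceNorm = b₁ + b₂ := by
    intro b₁ b₂ hb₁ hb₂
    rw [((hρ₁.1.smul (by exact_mod_cast hb₁ : (0 : ℂ) ≤ b₁)).add
      (hρ₂.1.smul (by exact_mod_cast hb₂ : (0 : ℂ) ≤ b₂))).traceNorm_eq_re_trace]
    simp [trace_add, trace_smul, hρ₁.2, hρ₂.2]
  rcases mul_nonneg_iff.1 ha with ⟨h₁, h₂⟩ | ⟨h₁, h₂⟩
  · rw [of_nonneg a₁ a₂ h₁ h₂, abs_of_nonneg h₁, abs_of_nonneg h₂]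
  · have hneg : (a₁ : ℂ) • ρ₁ + (a₂ : ℂ) • ρ₂ =
        ((-1 : ℝ) : ℂ) • (((-a₁ : ℝ) : ℂ) • ρ₁ + ((-a₂ : ℝ) : ℂ) • ρ₂) := by
      push_cast; simp
    rw [IsHermitian.traceNorm_congr _ hneg, IsHermitian.traceNorm_real_smul
      (hρ₁.1.1.real_combo hρ₂.1.1 _ _), of_nonneg _ _ (neg_nonneg.2 h₁) (neg_nonneg.2 h₂),
      abs_of_nonpos h₁, abs_of_nonpos h₂]
    ring

theorem IsHermitian.traceNorm_real_combo_eq_mul {ρ₁ ρ₂ : Matrix (Fin n) (Fin n) ℂ}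
    (h₁ : ρ₁.IsHermitian) (h₂ : ρ₂.IsHermitian) {a₁ : ℝ} (a₂ : ℝ) (ha₁ : a₁ ≠ 0) :
    (h₁.real_combo h₂ a₁ a₂).traceNorm = |a₁| * (h₁.sub_real_smul h₂ (-a₂ / a₁)).traceNorm := by
  have hfactor : (a₁ : ℂ) • ρ₁ + (a₂ : ℂ) • ρ₂ =
      (a₁ : ℂ) • (ρ₁ - ((-a₂ / a₁ : ℝ) : ℂ) • ρ₂) := by
    rw [smul_sub, smul_smul, ← Complex.ofReal_mul, mul_div_cancel₀ _ ha₁]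
    push_cast; simp [sub_eq_add_neg]
  rw [traceNorm_congr _ hfactor, traceNorm_real_smul (h₁.sub_real_smul h₂ _)]

end Matrix

/-- If `‖ρ₁ - tρ₂‖₁ ≥ ‖σ₁ - tσ₂‖₁` for all `t ≥ 0`, then the map
`a₁ρ₁ + a₂ρ₂ ↦ a₁σ₁ + a₂σ₂` is well defined and a trace-norm contraction on the real
span of `{ρ₁, ρ₂}`. -/
theorem statistical_morphism_contraction {n m : ℕ}
    (ρ₁ ρ₂ : Matrix (Fin n) (Fin n) ℂ) (σ₁ σ₂ : Matrix (Fin m) (Fin m) ℂ)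
    (hρ₁ : ρ₁.IsDensity) (hρ₂ : ρ₂.IsDensity)
    (hσ₁ : σ₁.IsDensity) (hσ₂ : σ₂.IsDensity)
    (h : ∀ t : ℝ, 0 ≤ t →
      (hσ₁.1.1.sub_real_smul hσ₂.1.1 t).traceNorm ≤
        (hρ₁.1.1.sub_real_smul hρ₂.1.1 t).traceNorm) :
    ∀ a₁ a₂ : ℝ,
      ((hσ₁.1.1.real_combo hσ₂.1.1 a₁ a₂).traceNorm) ≤
        ((hρ₁.1.1.real_combo hρ₂.1.1 a₁ a₂).traceNorm) := by
  intro a₁ a₂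
  by_cases hsign : 0 ≤ a₁ * a₂
  · rw [hσ₁.traceNorm_real_combo_of_mul_nonneg hσ₂ hsign,
      hρ₁.traceNorm_real_combo_of_mul_nonneg hρ₂ hsign]
  · have ha₁ : a₁ ≠ 0 := by rintro rfl; simp at hsign
    have ht : 0 ≤ -a₂ / a₁ := by
      rw [show -a₂ / a₁ = -(a₁ * a₂) / a₁ ^ 2 by field_simp]
      exact div_nonneg (by linarith) (sq_nonneg a₁)
    rw [hσ₁.1.1.traceNorm_real_combo_eq_mul hσ₂.1.1 a₂ ha₁,
      hρ₁.1.1.traceNorm_real_combo_eq_mul hρ₂.1.1 a₂ ha₁]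
    exact mul_le_mul_of_nonneg_left (h _ ht) (abs_nonneg a₁)
end
end

section
/- Let A_θ ∈ ℝ for θ in a finite set Θ and let ρ_θ, σ_θ be density operators. If ‖Σ_θ A_θ ρ_θ‖₁ ≥ ‖Σ_θ A_θ σ_θ‖₁ - 2ε Σ_θ |A_θ| holds for all real coefficients (A_θ), then for every test 0 ≤ N₀ ≤ I on the second system there exists 0 ≤ M₀ ≤ I on the first such that for the loss-difference: Tr(Σ_θ A_θ ρ_θ M₀) ≥ Tr(Σ_θ A_θ σ_θ N₀) - ε Σ_θ|A_θ| where M₀ is the support projection of (Σ_θ A_θ ρ_θ)₊. Concretely: max over 0 ≤ M₀ ≤ I of Tr(Σ A_θ ρ_θ M₀) = (Σ_θ A_θ + ‖Σ_θ A_θ ρ_θ‖₁)/2. -/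
open Matrix BigOperators
open scoped ComplexOrder

noncomputable section

/-- Real combinations of Hermitian matrices are Hermitian. -/
lemma Matrix.IsHermitian.real_sum {Θ : Type*} [Fintype Θ] {n : ℕ}
    (A : Θ → ℝ) (ρ : Θ → Matrix (Fin n) (Fin n) ℂ) (h : ∀ θ, (ρ θ).IsHermitian) :
    (∑ θ, (A θ : ℂ) • ρ θ).IsHermitian := by
  unfold Matrix.IsHermitian
  rw [Matrix.conjTranspose_sum]
  refine Finset.sum_congr rfl fun θ _ => ?_
  rw [Matrix.conjTranspose_smul, (h θ).eq]
  simp [Complex.star_def, Complex.conj_ofReal]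

/-! Diagonalise a Hermitian `S = U diag(λ) Uᴴ`. For a test `0 ≤ M ≤ 1` the matrix `Uᴴ M U` is again
a test, so its diagonal entries lie in `[0, 1]` and `Tr(S M) = ∑ λᵢ (Uᴴ M U)ᵢᵢ ≤ ∑ max(λᵢ, 0)`,
with equality for the spectral projection onto the nonnegative eigenvalues. Moreover
`∑ max(λᵢ, 0) = (Tr S + ‖S‖₁) / 2`, and `Tr(∑ A_θ ρ_θ) = ∑ A_θ` for density matrices. The first
claim follows by comparing these maxima for `ρ` and `σ` through the hypothesis at `B = A`. -/

namespace Matrix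

variable {𝕜 : Type*} [RCLike 𝕜] {n m : Type*} [DecidableEq n]

lemma PosSemidef.re_diag_le_one_s14 {M : Matrix n n 𝕜} (hM : (1 - M).PosSemidef) (i : n) :
    RCLike.re (M i i) ≤ 1 := by
  simpa using (RCLike.nonneg_iff.mp (hM.diag_nonneg (i := i))).1

lemma PosSemidef.conjTranspose_mul_mul_isometry [Fintype n] [Fintype m] [DecidableEq m]
    {M : Matrix n n 𝕜} (hM : M.PosSemidef) (hM1 : (1 - M).PosSemidef) {B : Matrix n m 𝕜}
    (hB : Bᴴ * B = 1) :
    (Bᴴ * M * B).PosSemidef ∧ (1 - Bᴴ * M * B).PosSemidef := by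
  refine ⟨hM.conjTranspose_mul_mul_same B, ?_⟩
  rw [show 1 - Bᴴ * M * B = Bᴴ * (1 - M) * B by
    rw [Matrix.mul_sub, Matrix.sub_mul, Matrix.mul_one, hB]]
  exact hM1.conjTranspose_mul_mul_same B

lemma posSemidef_diagonal_ofReal {d : n → ℝ} (h0 : 0 ≤ d) (h1 : d ≤ 1) :
    (diagonal fun i => (d i : 𝕜)).PosSemidef ∧ (1 - diagonal fun i => (d i : 𝕜)).PosSemidef := by
  rw [← diagonal_one, diagonal_sub]
  refine ⟨PosSemidef.diagonal fun i => ?_, PosSemidef.diagonal fun i => ?_⟩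
  · simpa using h0 i
  · rw [Pi.zero_apply, ← RCLike.ofReal_one, ← RCLike.ofReal_sub, RCLike.ofReal_nonneg, sub_nonneg]
    exact h1 i

end Matrix

namespace Matrix.IsHermitian

variable {𝕜 : Type*} [RCLike 𝕜] {n : Type*} [Fintype n] [DecidableEq n]
  {S : Matrix n n 𝕜} (hS : S.IsHermitian)
include hS

lemma trace_mul_eq_sum_eigenvalues (M : Matrix n n 𝕜) :
    (S * M).trace = ∑ i, (hS.eigenvalues i : 𝕜) *
      ((hS.eigenvectorUnitary : Matrix n n 𝕜)ᴴ * M * hS.eigenvectorUnitary) i i := by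
  conv_lhs => rw [hS.spectral_theorem, Unitary.conjStarAlgAut_apply, mul_assoc _ _ M,
    trace_mul_cycle, trace_mul_comm]
  simp [trace, diagonal_mul, star_eq_conjTranspose]

lemma re_trace_mul_le_sum_max {M : Matrix n n 𝕜} (hM : M.PosSemidef) (hM1 : (1 - M).PosSemidef) :
    RCLike.re (S * M).trace ≤ ∑ i, max (hS.eigenvalues i) 0 := by
  set U : Matrix n n 𝕜 := (hS.eigenvectorUnitary : Matrix n n 𝕜)
  obtain ⟨h0, h1⟩ := hM.conjTranspose_mul_mul_isometry hM1 (B := U)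
    (by simp [U, ← star_eq_conjTranspose])
  rw [hS.trace_mul_eq_sum_eigenvalues, map_sum]
  gcongr with i
  rw [RCLike.re_ofReal_mul]
  have ht0 : 0 ≤ RCLike.re ((Uᴴ * M * U) i i) := (RCLike.nonneg_iff.mp h0.diag_nonneg).1
  have ht1 := h1.re_diag_le_one_s14 i
  rcases le_total 0 (hS.eigenvalues i) with hl | hl
  · nlinarith [le_max_left (hS.eigenvalues i) 0]
  · nlinarith [le_max_right (hS.eigenvalues i) 0]

lemma exists_re_trace_mul_eq_sum_max :
    ∃ M : Matrix n n 𝕜, M.PosSemidef ∧ (1 - M).PosSemidef ∧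
      RCLike.re (S * M).trace = ∑ i, max (hS.eigenvalues i) 0 := by
  set U : Matrix n n 𝕜 := (hS.eigenvectorUnitary : Matrix n n 𝕜)
  set p : n → ℝ := fun i => if 0 ≤ hS.eigenvalues i then 1 else 0
  obtain ⟨hp0, hp1⟩ := posSemidef_diagonal_ofReal (𝕜 := 𝕜) (d := p)
    (fun i => by dsimp [p]; split_ifs <;> norm_num) (fun i => by dsimp [p]; split_ifs <;> norm_num)
  obtain ⟨h0, h1⟩ := hp0.conjTranspose_mul_mul_isometry hp1 (B := Uᴴ)
    (by simp [U, ← star_eq_conjTranspose])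
  rw [conjTranspose_conjTranspose] at h0 h1
  refine ⟨_, h0, h1, ?_⟩
  have hconj :
      Uᴴ * (U * diagonal (fun i => (p i : 𝕜)) * Uᴴ) * U = diagonal fun i => (p i : 𝕜) := by
    simp [U, ← star_eq_conjTranspose, ← mul_assoc, mul_assoc _ (star _)]
  rw [hS.trace_mul_eq_sum_eigenvalues, hconj, map_sum]
  refine Finset.sum_congr rfl fun i _ => ?_
  rw [diagonal_apply_eq, ← RCLike.ofReal_mul, RCLike.ofReal_re]
  dsimp [p]; split_ifs with h
  · simp [h]
  · simp [le_of_not_ge h]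

lemma isGreatest_re_trace_mul :
    IsGreatest {x : ℝ | ∃ M : Matrix n n 𝕜, M.PosSemidef ∧ (1 - M).PosSemidef ∧
        x = RCLike.re (S * M).trace} (∑ i, max (hS.eigenvalues i) 0) :=
  ⟨let ⟨M, hM, hM1, hx⟩ := hS.exists_re_trace_mul_eq_sum_max; ⟨M, hM, hM1, hx.symm⟩,
    fun _ ⟨_, hM, hM1, hx⟩ => hx ▸ hS.re_trace_mul_le_sum_max hM hM1⟩

end Matrix.IsHermitian

lemma Matrix.IsHermitian.sum_max_eigenvalues_zero {n : ℕ} {S : Matrix (Fin n) (Fin n) ℂ}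
    (hS : S.IsHermitian) : ∑ i, max (hS.eigenvalues i) 0 = (S.trace.re + hS.traceNorm) / 2 := by
  rw [hS.trace_eq_sum_eigenvalues, Complex.re_sum, IsHermitian.traceNorm,
    ← Finset.sum_add_distrib, Finset.sum_div]
  refine Finset.sum_congr rfl fun i _ => ?_
  change max _ 0 = (hS.eigenvalues i + |hS.eigenvalues i|) / 2
  rcases le_total 0 (hS.eigenvalues i) with h | h
  · rw [max_eq_left h, abs_of_nonneg h]; ring
  · rw [max_eq_right h, abs_of_nonpos h]; ring

lemma Matrix.trace_sum_ofReal_smul {Θ : Type*} [Fintype Θ] {n : Type*} [Fintype n]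
    (A : Θ → ℝ) (ρ : Θ → Matrix n n ℂ) (hρ : ∀ θ, (ρ θ).trace = 1) :
    (∑ θ, (A θ : ℂ) • ρ θ).trace = ((∑ θ, A θ : ℝ) : ℂ) := by
  simp [trace_sum, trace_smul, hρ]

theorem deficiency_tests_general {Θ : Type*} [Fintype Θ] {n m : ℕ}
    (ρ : Θ → Matrix (Fin n) (Fin n) ℂ) (σ : Θ → Matrix (Fin m) (Fin m) ℂ)
    (hρ : ∀ θ, (ρ θ).IsDensity) (hσ : ∀ θ, (σ θ).IsDensity)
    (ε : ℝ) (A : Θ → ℝ)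
    (h : ∀ B : Θ → ℝ,
      (Matrix.IsHermitian.real_sum B σ fun θ => (hσ θ).1.1).traceNorm - 2 * ε * ∑ θ, |B θ| ≤
        (Matrix.IsHermitian.real_sum B ρ fun θ => (hρ θ).1.1).traceNorm) :
    (∀ N₀ : Matrix (Fin m) (Fin m) ℂ, N₀.PosSemidef → (1 - N₀).PosSemidef →
      ∃ M₀ : Matrix (Fin n) (Fin n) ℂ, M₀.PosSemidef ∧ (1 - M₀).PosSemidef ∧
        (((∑ θ, (A θ : ℂ) • σ θ) * N₀).trace).re - ε * ∑ θ, |A θ| ≤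
          (((∑ θ, (A θ : ℂ) • ρ θ) * M₀).trace).re) ∧
    IsGreatest
      {x : ℝ | ∃ M : Matrix (Fin n) (Fin n) ℂ, M.PosSemidef ∧ (1 - M).PosSemidef ∧
        x = (((∑ θ, (A θ : ℂ) • ρ θ) * M).trace).re}
      ((∑ θ, A θ + (Matrix.IsHermitian.real_sum A ρ fun θ => (hρ θ).1.1).traceNorm) / 2) := by
  have hmaxρ := (Matrix.IsHermitian.real_sum A ρ fun θ => (hρ θ).1.1).isGreatest_re_trace_mul
  have hmaxσ := (Matrix.IsHermitian.real_sum A σ fun θ => (hσ θ).1.1).isGreatest_re_trace_mul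
  rw [Matrix.IsHermitian.sum_max_eigenvalues_zero,
    Matrix.trace_sum_ofReal_smul A ρ fun θ => (hρ θ).2, Complex.ofReal_re] at hmaxρ
  rw [Matrix.IsHermitian.sum_max_eigenvalues_zero,
    Matrix.trace_sum_ofReal_smul A σ fun θ => (hσ θ).2, Complex.ofReal_re] at hmaxσ
  simp only [RCLike.re_to_complex] at hmaxρ hmaxσ
  refine ⟨fun N₀ hN₀ hN₀1 => ?_, hmaxρ⟩
  obtain ⟨M₀, hM₀, hM₀1, hM₀_eq⟩ := hmaxρ.1
  refine ⟨M₀, hM₀, hM₀1, ?_⟩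
  have hN₀_le := hmaxσ.2 ⟨N₀, hN₀, hN₀1, rfl⟩
  have hnorm := h A
  rw [← hM₀_eq]
  linarith

/-- If `‖∑ A_θ ρ_θ‖₁ ≥ ‖∑ A_θ σ_θ‖₁ - 2ε ∑|A_θ|` for all real coefficients, then for
every test `0 ≤ N₀ ≤ I` there is a test `0 ≤ M₀ ≤ I` with
`Tr(∑ A_θ ρ_θ M₀) ≥ Tr(∑ A_θ σ_θ N₀) - ε ∑|A_θ|`; concretely,
`max_{0 ≤ M ≤ I} Tr((∑ A_θ ρ_θ) M) = (∑ A_θ + ‖∑ A_θ ρ_θ‖₁)/2`. -/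
theorem deficiency_tests {Θ : Type*} [Fintype Θ] {n m : ℕ}
    (ρ : Θ → Matrix (Fin n) (Fin n) ℂ) (σ : Θ → Matrix (Fin m) (Fin m) ℂ)
    (hρ : ∀ θ, (ρ θ).IsDensity) (hσ : ∀ θ, (σ θ).IsDensity)
    (ε : ℝ) (hε : 0 ≤ ε) (A : Θ → ℝ)
    (h : ∀ B : Θ → ℝ,
      (Matrix.IsHermitian.real_sum B σ fun θ => (hσ θ).1.1).traceNorm - 2 * ε * ∑ θ, |B θ| ≤
        (Matrix.IsHermitian.real_sum B ρ fun θ => (hρ θ).1.1).traceNorm) :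
    (∀ N₀ : Matrix (Fin m) (Fin m) ℂ, N₀.PosSemidef → (1 - N₀).PosSemidef →
      ∃ M₀ : Matrix (Fin n) (Fin n) ℂ, M₀.PosSemidef ∧ (1 - M₀).PosSemidef ∧
        (((∑ θ, (A θ : ℂ) • σ θ) * N₀).trace).re - ε * ∑ θ, |A θ| ≤
          (((∑ θ, (A θ : ℂ) • ρ θ) * M₀).trace).re) ∧
    IsGreatest
      {x : ℝ | ∃ M : Matrix (Fin n) (Fin n) ℂ, M.PosSemidef ∧ (1 - M).PosSemidef ∧
        x = (((∑ θ, (A θ : ℂ) • ρ θ) * M).trace).re}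
      ((∑ θ, A θ + (Matrix.IsHermitian.real_sum A ρ fun θ => (hρ θ).1.1).traceNorm) / 2) :=
  deficiency_tests_general ρ σ hρ hσ ε A h
end
end

section
/- Let u, v be positive semidefinite operators on a finite-dimensional Hilbert space H such that ker(u) is not contained in ker(v) and ker(v) is not contained in ker(u), and let B(K) be another matrix algebra with given positive semidefinite operators L(u), L(v) ∈ B(K). Choose φ, ψ ∈ H with uφ = 0, vψ = 0, uψ ≠ 0, vφ ≠ 0. Then the map T(a) = (⟨ψ, aψ⟩/⟨ψ, uψ⟩) L(u) + (⟨φ, aφ⟩/⟨φ, vφ⟩) L(v) is a completely positive linear map B(H) → B(K) with T(u) = L(u) and T(v) = L(v). -/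
/-!
Each summand of `T` is a vector state `a ↦ ⟨ξ, a ξ⟩`, scaled by a nonnegative number and tensored
with a positive target. Applied blockwise to a positive block matrix `A`, a vector state yields the
compression `Wᴴ A W` by the block-diagonal matrix `W = 1 ⊗ ξ`, which is positive, and tensoring
with a positive matrix preserves positivity. The identities `T(u) = L(u)`, `T(v) = L(v)` hold
because `uφ = 0` and `vψ = 0`, while `uψ ≠ 0` and `vφ ≠ 0` make the denominators nonzero.
-/

open Matrix BigOperators
open scoped ComplexOrder

noncomputable section

/-- The completely positive extension map built from two vectors `ψ, φ` and target
operators `Lu, Lv`. -/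
def extensionMap {n m : ℕ} (u v : Matrix (Fin n) (Fin n) ℂ)
    (Lu Lv : Matrix (Fin m) (Fin m) ℂ) (φ ψ : Fin n → ℂ) :
    Matrix (Fin n) (Fin n) ℂ → Matrix (Fin m) (Fin m) ℂ :=
  fun a =>
    ((star ψ ⬝ᵥ a *ᵥ ψ) / (star ψ ⬝ᵥ u *ᵥ ψ)) • Lu +
    ((star φ ⬝ᵥ a *ᵥ φ) / (star φ ⬝ᵥ v *ᵥ φ)) • Lv

end

open scoped Kronecker

namespace Matrix

variable {R 𝕜 ι n m : Type*}

/-- A matrix on `Fin k × n` is read as a `k × k` block matrix with blocks in `Matrix n n 𝕜`;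
`T` is completely positive if applying it blockwise preserves positive semidefiniteness. -/
def IsCompletelyPositive [RCLike 𝕜] (T : Matrix n n 𝕜 → Matrix m m 𝕜) : Prop :=
  ∀ k : ℕ, ∀ A : Matrix (Fin k × n) (Fin k × n) 𝕜, A.PosSemidef →
    (of fun p q : Fin k × m => T (of fun i j => A (p.1, i) (q.1, j)) p.2 q.2).PosSemidef

theorem PosSemidef.blockwise_dotProduct_mulVec [Ring R] [PartialOrder R] [StarRing R]
    [Fintype ι] [Fintype n] {A : Matrix (ι × n) (ι × n) R} (hA : A.PosSemidef) (ξ : n → R) :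
    (of fun p q : ι => star ξ ⬝ᵥ (of fun i j => A (p, i) (q, j)) *ᵥ ξ).PosSemidef := by
  classical
  let W : Matrix (ι × n) ι R := of fun r s => if r.1 = s then ξ r.2 else 0
  convert hA.conjTranspose_mul_mul_same W using 1
  ext p q
  simp only [W, dotProduct, Pi.star_apply, mulVec, of_apply, mul_apply, conjTranspose_apply,
    Fintype.sum_prod_type, Finset.mul_sum, Finset.sum_mul, mul_assoc, apply_ite star, star_zero,
    ite_mul, mul_ite, zero_mul, mul_zero, Finset.sum_ite_irrel, Finset.sum_const_zero,
    Finset.sum_ite_eq', Finset.mem_univ, ↓reduceIte]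
  exact Finset.sum_comm

theorem PosSemidef.dotProduct_mulVec_pos [RCLike 𝕜] [Fintype n] {A : Matrix n n 𝕜}
    (hA : A.PosSemidef) {x : n → 𝕜} (hx : A *ᵥ x ≠ 0) : 0 < star x ⬝ᵥ A *ᵥ x :=
  (hA.dotProduct_mulVec_nonneg x).lt_of_ne' (mt (hA.dotProduct_mulVec_zero_iff x).mp hx)

namespace IsCompletelyPositive

variable [RCLike 𝕜] {T S : Matrix n n 𝕜 → Matrix m m 𝕜}

protected theorem add (hT : IsCompletelyPositive T) (hS : IsCompletelyPositive S) :
    IsCompletelyPositive (T + S) :=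
  fun k A hA => (hT k A hA).add (hS k A hA)

protected theorem smul (hT : IsCompletelyPositive T) {c : 𝕜} (hc : 0 ≤ c) :
    IsCompletelyPositive (c • T) :=
  fun k A hA => (hT k A hA).smul hc

end IsCompletelyPositive

theorem isCompletelyPositive_dotProduct_mulVec_smul [RCLike 𝕜] [Fintype n] [Finite m]
    (ξ : n → 𝕜) {L : Matrix m m 𝕜} (hL : L.PosSemidef) :
    IsCompletelyPositive fun a : Matrix n n 𝕜 => (star ξ ⬝ᵥ a *ᵥ ξ) • L :=
  fun _ _ hA => (hA.blockwise_dotProduct_mulVec ξ).kronecker hL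

end Matrix

theorem extensionMap_eq_smul_add_smul {n m : ℕ} (u v : Matrix (Fin n) (Fin n) ℂ)
    (Lu Lv : Matrix (Fin m) (Fin m) ℂ) (φ ψ : Fin n → ℂ) :
    extensionMap u v Lu Lv φ ψ =
      (star ψ ⬝ᵥ u *ᵥ ψ)⁻¹ • (fun a => (star ψ ⬝ᵥ a *ᵥ ψ) • Lu) +
      (star φ ⬝ᵥ v *ᵥ φ)⁻¹ • (fun a => (star φ ⬝ᵥ a *ᵥ φ) • Lv) := by
  funext a
  simp only [extensionMap, Pi.add_apply, Pi.smul_apply, smul_smul, div_eq_inv_mul]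

/-- Given `u, v ≥ 0` with mutually non-contained kernels, witnessed by `φ, ψ` with
`uφ = 0`, `vψ = 0`, `uψ ≠ 0`, `vφ ≠ 0`, and positive targets `Lu, Lv`, the map
`T(a) = (⟨ψ,aψ⟩/⟨ψ,uψ⟩) Lu + (⟨φ,aφ⟩/⟨φ,vφ⟩) Lv` is completely positive and maps
`u ↦ Lu`, `v ↦ Lv`. -/
theorem extensionMap_completelyPositive {n m : ℕ}
    (u v : Matrix (Fin n) (Fin n) ℂ) (hu : u.PosSemidef) (hv : v.PosSemidef)
    (Lu Lv : Matrix (Fin m) (Fin m) ℂ) (hLu : Lu.PosSemidef) (hLv : Lv.PosSemidef)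
    (φ ψ : Fin n → ℂ) (hφu : u *ᵥ φ = 0) (hψv : v *ᵥ ψ = 0)
    (hψu : u *ᵥ ψ ≠ 0) (hφv : v *ᵥ φ ≠ 0) :
    (∀ k : ℕ, ∀ A : Matrix (Fin k × Fin n) (Fin k × Fin n) ℂ, A.PosSemidef →
      (Matrix.of fun p q : Fin k × Fin m =>
        extensionMap u v Lu Lv φ ψ
          (Matrix.of fun i j : Fin n => A (p.1, i) (q.1, j)) p.2 q.2).PosSemidef) ∧
    extensionMap u v Lu Lv φ ψ u = Lu ∧
    extensionMap u v Lu Lv φ ψ v = Lv := by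
  have hdu := hu.dotProduct_mulVec_pos hψu
  have hdv := hv.dotProduct_mulVec_pos hφv
  refine ⟨?_, ?_, ?_⟩
  · change IsCompletelyPositive (extensionMap u v Lu Lv φ ψ)
    rw [extensionMap_eq_smul_add_smul]
    have hψ := (isCompletelyPositive_dotProduct_mulVec_smul ψ hLu).smul
      (RCLike.inv_pos_of_pos hdu).le
    have hφ := (isCompletelyPositive_dotProduct_mulVec_smul φ hLv).smul
      (RCLike.inv_pos_of_pos hdv).le
    exact hψ.add hφ
  · simp [extensionMap, hφu, div_self hdu.ne']
  · simp [extensionMap, hψv, div_self hdv.ne']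
end
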